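/- OUT case, single-coordinate variance: with the challenge batch mean μ_B formed from k samples of a fresh task independent of all training data, Var((μ̂ − μ̄)·(μ_B − μ̄)) = (1/T)·[σ̄⁴ + σ⁴/(k·N) + ((k+N)/(k·N))·σ̄²·σ²]. -/

import Mathlib

/-!
The training error `μ̂ - μ̄ = (1/T) ∑ μᵢ + (1/(TN)) ∑ εᵢⱼ - μ̄` and the challenge error
`μ_B - μ̄ = μ' + (1/k) ∑ ε'ⱼ - μ̄` are built from disjoint parts of an independent family,
so they are independent and centred. For such variables `Var(XY) = E[X²] E[Y²] = Var X · Var Y`,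
and the two factors are `σ̄²/T + σ²/(TN)` and `σ̄² + σ²/k` by additivity of variance over
independent summands; their product is the claimed formula.
-/

open MeasureTheory ProbabilityTheory
open scoped NNReal

namespace ProbabilityTheory

variable {Ω : Type*} {mΩ : MeasurableSpace Ω} {P : Measure Ω}

lemma HasLaw.of_map_eq {𝓧 : Type*} {m𝓧 : MeasurableSpace 𝓧} {μ : Measure 𝓧} [NeZero μ]
    {X : Ω → 𝓧} (h : P.map X = μ) : HasLaw X μ P :=
  ⟨.of_map_ne_zero (h ▸ NeZero.ne μ), h⟩

section GaussianReal

variable {X : Ω → ℝ} {m : ℝ} {v : ℝ≥0}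

lemma HasLaw.memLp_two_of_gaussianReal (hX : HasLaw X (gaussianReal m v) P) : MemLp X 2 P := by
  have h := memLp_id_gaussianReal (μ := m) (v := v) 2
  rw [← hX.map_eq] at h
  exact (memLp_map_measure_iff (hX.map_eq ▸ aestronglyMeasurable_id) hX.aemeasurable).1 h

lemma HasLaw.integral_eq_of_gaussianReal (hX : HasLaw X (gaussianReal m v) P) : P[X] = m :=
  hX.integral_eq.trans integral_id_gaussianReal

lemma HasLaw.variance_eq_of_gaussianReal (hX : HasLaw X (gaussianReal m v) P) :
    Var[X; P] = v :=
  hX.variance_eq.trans variance_id_gaussianReal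

end GaussianReal

lemma IndepFun.variance_mul_centered [IsProbabilityMeasure P] {X Y : Ω → ℝ} (hXY : X ⟂ᵢ[P] Y)
    (hX : MemLp X 2 P) (hY : MemLp Y 2 P) :
    Var[fun ω ↦ (X ω - P[X]) * (Y ω - P[Y]); P] = Var[X; P] * Var[Y; P] := by
  set X' := fun ω ↦ X ω - P[X]
  set Y' := fun ω ↦ Y ω - P[Y]
  have hX' : MemLp X' 2 P := hX.sub (memLp_const _)
  have hY' : MemLp Y' 2 P := hY.sub (memLp_const _)
  have hind : X' ⟂ᵢ[P] Y' := hXY.comp (measurable_id.sub_const _) (measurable_id.sub_const _)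
  have hind_sq : (fun ω ↦ X' ω ^ 2) ⟂ᵢ[P] (fun ω ↦ Y' ω ^ 2) :=
    hind.comp (measurable_id.pow_const 2) (measurable_id.pow_const 2)
  have hX'_mean : P[X'] = 0 := by
    simp [X', integral_sub (hX.integrable one_le_two) (integrable_const _)]
  have hmem : MemLp (fun ω ↦ X' ω * Y' ω) 2 P := by
    refine (memLp_two_iff_integrable_sq
      (hX'.aestronglyMeasurable.mul hY'.aestronglyMeasurable)).2 ?_
    simpa only [Pi.mul_def, mul_pow] using
      hind_sq.integrable_mul hX'.integrable_sq hY'.integrable_sq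
  calc Var[fun ω ↦ X' ω * Y' ω; P]
      _ = ∫ ω, (X' ω * Y' ω) ^ 2 ∂P - (∫ ω, X' ω * Y' ω ∂P) ^ 2 := variance_eq_sub hmem
      _ = (∫ ω, X' ω ^ 2 ∂P) * (∫ ω, Y' ω ^ 2 ∂P) - (P[X'] * P[Y']) ^ 2 := by
        simp_rw [mul_pow]
        rw [hind_sq.integral_fun_mul_eq_mul_integral hX'.integrable_sq.1 hY'.integrable_sq.1,
          hind.integral_fun_mul_eq_mul_integral hX'.1 hY'.1, mul_pow]
      _ = Var[X; P] * Var[Y; P] := by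
        rw [hX'_mean, variance_eq_integral hX.aemeasurable, variance_eq_integral hY.aemeasurable]
        simp [X', Y']

lemma iIndepFun.variance_fun_sum_mul {ι : Type*} [Fintype ι] {X : ι → Ω → ℝ}
    (h : iIndepFun X P) (hX : ∀ i, MemLp (X i) 2 P) (c : ι → ℝ) :
    Var[fun ω ↦ ∑ i, c i * X i ω; P] = ∑ i, c i ^ 2 * Var[X i; P] := by
  have hsum : (fun ω ↦ ∑ i, c i * X i ω) = ∑ i, fun ω ↦ c i * X i ω := by
    ext ω; simp
  rw [hsum, IndepFun.variance_sum (fun i _ ↦ (hX i).const_mul (c i))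
    fun i _ j _ hij ↦ (h.indepFun hij).comp (measurable_const_mul _) (measurable_const_mul _)]
  simp only [variance_const_mul]

lemma iIndepFun.indepFun_sumElim {ι κ β : Type*} [Fintype ι] [Fintype κ] [MeasurableSpace β]
    {X : ι → Ω → β} {Y : κ → Ω → β} (h : iIndepFun (Sum.elim X Y) P)
    (hX : ∀ i, AEMeasurable (X i) P) (hY : ∀ j, AEMeasurable (Y j) P) :
    (fun ω i ↦ X i ω) ⟂ᵢ[P] (fun ω j ↦ Y j ω) := by
  have hST : Disjoint ((Finset.univ : Finset ι).map .inl) ((Finset.univ : Finset κ).map .inr) := by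
    simp [Finset.disjoint_left]
  refine (h.indepFun_finset₀ _ _ hST (Sum.forall.2 ⟨hX, hY⟩)).comp
    (φ := fun x i ↦ x ⟨.inl i, by simp⟩) (ψ := fun x j ↦ x ⟨.inr j, by simp⟩) ?_ ?_
  · exact measurable_pi_lambda _ fun i ↦ measurable_pi_apply _
  · exact measurable_pi_lambda _ fun j ↦ measurable_pi_apply _

lemma iIndepFun.sumElim_assoc {ι κ ν β : Type*} [MeasurableSpace β] {X : ι → Ω → β}
    {Y : κ → Ω → β} {Z : ν → Ω → β} (h : iIndepFun (Sum.elim X (Sum.elim Y Z)) P) :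
    iIndepFun (Sum.elim (Sum.elim X Y) Z) P := by
  convert h.precomp (Equiv.sumAssoc ι κ ν).injective using 1
  ext ((i | j) | k) <;> rfl

section WeightedBlockSum

variable {ι κ : Type*} [Fintype ι] [Fintype κ]

def weightedBlockSum (α β : ℝ) (U : ι → Ω → ℝ) (W : κ → Ω → ℝ) : Ω → ℝ :=
  fun ω ↦ α * ∑ i, U i ω + β * ∑ j, W j ω

variable {U : ι → Ω → ℝ} {W : κ → Ω → ℝ} {m m' : ℝ} {s t : ℝ≥0}

lemma memLp_weightedBlockSum (hU : ∀ i, HasLaw (U i) (gaussianReal m s) P)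
    (hW : ∀ j, HasLaw (W j) (gaussianReal m' t) P) (α β : ℝ) :
    MemLp (weightedBlockSum α β U W) 2 P :=
  ((memLp_finsetSum _ fun i _ ↦ (hU i).memLp_two_of_gaussianReal).const_mul α).add
    ((memLp_finsetSum _ fun j _ ↦ (hW j).memLp_two_of_gaussianReal).const_mul β)

lemma integral_weightedBlockSum [IsProbabilityMeasure P]
    (hU : ∀ i, HasLaw (U i) (gaussianReal m s) P) (hW : ∀ j, HasLaw (W j) (gaussianReal m' t) P)
    (α β : ℝ) :
    P[weightedBlockSum α β U W] = α * Fintype.card ι * m + β * Fintype.card κ * m' := by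
  have hUi i := ((hU i).memLp_two_of_gaussianReal).integrable one_le_two
  have hWj j := ((hW j).memLp_two_of_gaussianReal).integrable one_le_two
  simp only [weightedBlockSum]
  rw [integral_add ((integrable_finsetSum _ fun i _ ↦ hUi i).const_mul α)
    ((integrable_finsetSum _ fun j _ ↦ hWj j).const_mul β), integral_const_mul, integral_const_mul,
    integral_finsetSum _ fun i _ ↦ hUi i, integral_finsetSum _ fun j _ ↦ hWj j]
  simp only [(hU _).integral_eq_of_gaussianReal, (hW _).integral_eq_of_gaussianReal,
    Finset.sum_const, Finset.card_univ, nsmul_eq_mul]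
  ring

lemma variance_weightedBlockSum (hU : ∀ i, HasLaw (U i) (gaussianReal m s) P)
    (hW : ∀ j, HasLaw (W j) (gaussianReal m' t) P) (hUW : iIndepFun (Sum.elim U W) P)
    (α β : ℝ) :
    Var[weightedBlockSum α β U W; P] = α ^ 2 * Fintype.card ι * s + β ^ 2 * Fintype.card κ * t := by
  have hsum : weightedBlockSum α β U W =
      fun ω ↦ ∑ x, Sum.elim (fun _ ↦ α) (fun _ ↦ β) x * Sum.elim U W x ω := by
    ext ω
    simp [weightedBlockSum, Finset.mul_sum]
  rw [hsum, hUW.variance_fun_sum_mul (Sum.forall.2 ⟨fun i ↦ (hU i).memLp_two_of_gaussianReal,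
    fun j ↦ (hW j).memLp_two_of_gaussianReal⟩)]
  simp only [Fintype.sum_sum_type, Sum.elim_inl, Sum.elim_inr, (hU _).variance_eq_of_gaussianReal,
    (hW _).variance_eq_of_gaussianReal, Finset.sum_const, Finset.card_univ, nsmul_eq_mul]
  ring

lemma indepFun_weightedBlockSum {ι' κ' : Type*} [Fintype ι'] [Fintype κ'] {U' : ι' → Ω → ℝ}
    {W' : κ' → Ω → ℝ} (h : iIndepFun (Sum.elim (Sum.elim U W) (Sum.elim U' W')) P)
    (hUW : ∀ x, AEMeasurable (Sum.elim U W x) P) (hUW' : ∀ x, AEMeasurable (Sum.elim U' W' x) P)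
    (α β α' β' : ℝ) :
    weightedBlockSum α β U W ⟂ᵢ[P] weightedBlockSum α' β' U' W' := by
  have hφ : Measurable fun x : ι ⊕ κ → ℝ ↦ α * ∑ i, x (.inl i) + β * ∑ j, x (.inr j) := by
    fun_prop
  have hψ : Measurable fun x : ι' ⊕ κ' → ℝ ↦ α' * ∑ i, x (.inl i) + β' * ∑ j, x (.inr j) := by
    fun_prop
  exact (h.indepFun_sumElim hUW hUW').comp hφ hψ

lemma weightedBlockSum_eq_mean_of_means {T N : ℕ} (hN : N ≠ 0) (X : Fin T → Ω → ℝ)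
    (Y : Fin T → Fin N → Ω → ℝ) (ω : Ω) :
    weightedBlockSum (1 / T) (1 / (T * N)) X (fun p : Fin T × Fin N ↦ Y p.1 p.2) ω
      = 1 / T * ∑ i, 1 / N * ∑ j, (X i ω + Y i j ω) := by
  rw [weightedBlockSum, Fintype.sum_prod_type, Finset.mul_sum, Finset.mul_sum, Finset.mul_sum,
    ← Finset.sum_add_distrib]
  refine Finset.sum_congr rfl fun i _ ↦ ?_
  rw [Finset.sum_add_distrib, Finset.sum_const, Finset.card_univ, Fintype.card_fin, nsmul_eq_mul]
  field_simp

lemma weightedBlockSum_eq_mean {k : ℕ} (hk : k ≠ 0) (X : Ω → ℝ) (Y : Fin k → Ω → ℝ) (ω : Ω) :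
    weightedBlockSum 1 (1 / k) (fun _ : Unit ↦ X) Y ω = 1 / k * ∑ j, (X ω + Y j ω) := by
  rw [weightedBlockSum, Fintype.sum_unique (fun _ : Unit ↦ X ω), Finset.sum_add_distrib,
    Finset.sum_const, Finset.card_univ, Fintype.card_fin, nsmul_eq_mul]
  field_simp

end WeightedBlockSum

end ProbabilityTheory

theorem out_case_single_coordinate_variance_general
    {Ω : Type*} [MeasureSpace Ω] [IsProbabilityMeasure (ℙ : Measure Ω)]
    (T N k : ℕ) (hT : 0 < T) (hN : 0 < N) (hk : 0 < k)
    (μbar σbar σ : ℝ)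
    (μ : Fin T → Ω → ℝ) (ε : Fin T → Fin N → Ω → ℝ)
    (μ' : Ω → ℝ) (ε' : Fin k → Ω → ℝ)
    (hμlaw : ∀ i, Measure.map (μ i) ℙ = gaussianReal μbar (σbar ^ 2).toNNReal)
    (hεlaw : ∀ i j, Measure.map (ε i j) ℙ = gaussianReal 0 (σ ^ 2).toNNReal)
    (hμ'law : Measure.map μ' ℙ = gaussianReal μbar (σbar ^ 2).toNNReal)
    (hε'law : ∀ j, Measure.map (ε' j) ℙ = gaussianReal 0 (σ ^ 2).toNNReal)
    (hindep : iIndepFun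
      (Sum.elim μ (Sum.elim (fun p : Fin T × Fin N => ε p.1 p.2)
        (Sum.elim (fun _ : Unit => μ') ε'))) ℙ) :
    variance
      (fun ω =>
        ((1 / (T : ℝ)) * ∑ i : Fin T, (1 / (N : ℝ)) * ∑ j : Fin N, (μ i ω + ε i j ω) - μbar)
          * ((1 / (k : ℝ)) * ∑ j : Fin k, (μ' ω + ε' j ω) - μbar)) ℙ
      = (1 / (T : ℝ)) *
          (σbar ^ 4 + σ ^ 4 / (k * N) + ((k + N : ℝ) / (k * N)) * (σbar ^ 2 * σ ^ 2)) := by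
  have hμ i := HasLaw.of_map_eq (hμlaw i)
  have hε (p : Fin T × Fin N) := HasLaw.of_map_eq (hεlaw p.1 p.2)
  have hμ' (_ : Unit) := HasLaw.of_map_eq hμ'law
  have hε' j := HasLaw.of_map_eq (hε'law j)
  have hind := hindep.sumElim_assoc
  set A := weightedBlockSum (1 / T) (1 / (T * N)) μ fun p : Fin T × Fin N ↦ ε p.1 p.2
  set B := weightedBlockSum 1 (1 / k) (fun _ : Unit ↦ μ') ε'
  have hAB : A ⟂ᵢ[ℙ] B := indepFun_weightedBlockSum hind
    (Sum.forall.2 ⟨fun i ↦ (hμ i).aemeasurable, fun p ↦ (hε p).aemeasurable⟩)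
    (Sum.forall.2 ⟨fun u ↦ (hμ' u).aemeasurable, fun j ↦ (hε' j).aemeasurable⟩) _ _ _ _
  have hAmean : ℙ[A] = μbar := by
    rw [integral_weightedBlockSum hμ hε]
    simp only [Fintype.card_fin, Fintype.card_prod, Nat.cast_mul, mul_zero, add_zero]
    field_simp
  have hBmean : ℙ[B] = μbar := by
    rw [integral_weightedBlockSum hμ' hε']
    simp
  calc _ = Var[fun ω ↦ (A ω - ℙ[A]) * (B ω - ℙ[B]); ℙ] := by
        simp_rw [hAmean, hBmean, A, B, weightedBlockSum_eq_mean_of_means hN.ne',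
          weightedBlockSum_eq_mean hk.ne']
    _ = Var[A; ℙ] * Var[B; ℙ] :=
        hAB.variance_mul_centered (memLp_weightedBlockSum hμ hε _ _)
          (memLp_weightedBlockSum hμ' hε' _ _)
    _ = _ := by
        rw [variance_weightedBlockSum hμ hε (hind.precomp (g := Sum.inl) Sum.inl_injective),
          variance_weightedBlockSum hμ' hε' (hind.precomp (g := Sum.inr) Sum.inr_injective)]
        simp only [Real.coe_toNNReal _ (sq_nonneg _), Fintype.card_fin, Fintype.card_prod,
          Fintype.card_unique, Nat.cast_mul, Nat.cast_one]
        field_simp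
        ring

/-- OUT case, single-coordinate variance: with the challenge batch mean `μ_B` formed from `k`
samples of a fresh task independent of all training data,
`Var((μ̂ − μ̄)·(μ_B − μ̄)) = (1/T)·[σ̄⁴ + σ⁴/(k·N) + ((k+N)/(k·N))·σ̄²·σ²]`. -/
theorem out_case_single_coordinate_variance
    {Ω : Type*} [MeasureSpace Ω] [IsProbabilityMeasure (ℙ : Measure Ω)]
    (T N k : ℕ) (hT : 0 < T) (hN : 0 < N) (hk : 0 < k) (hkN : k ≤ N)
    (μbar σbar σ : ℝ) (hσbar : 0 < σbar) (hσ : 0 < σ)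
    (μ : Fin T → Ω → ℝ) (ε : Fin T → Fin N → Ω → ℝ)
    (μ' : Ω → ℝ) (ε' : Fin k → Ω → ℝ)
    (hμmeas : ∀ i, Measurable (μ i))
    (hεmeas : ∀ i j, Measurable (ε i j))
    (hμ'meas : Measurable μ')
    (hε'meas : ∀ j, Measurable (ε' j))
    (hμlaw : ∀ i, Measure.map (μ i) ℙ = gaussianReal μbar (σbar ^ 2).toNNReal)
    (hεlaw : ∀ i j, Measure.map (ε i j) ℙ = gaussianReal 0 (σ ^ 2).toNNReal)
    (hμ'law : Measure.map μ' ℙ = gaussianReal μbar (σbar ^ 2).toNNReal)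
    (hε'law : ∀ j, Measure.map (ε' j) ℙ = gaussianReal 0 (σ ^ 2).toNNReal)
    (hindep : iIndepFun
      (Sum.elim μ (Sum.elim (fun p : Fin T × Fin N => ε p.1 p.2)
        (Sum.elim (fun _ : Unit => μ') ε'))) ℙ) :
    variance
      (fun ω =>
        ((1 / (T : ℝ)) * ∑ i : Fin T, (1 / (N : ℝ)) * ∑ j : Fin N, (μ i ω + ε i j ω) - μbar)
          * ((1 / (k : ℝ)) * ∑ j : Fin k, (μ' ω + ε' j ω) - μbar)) ℙ
      = (1 / (T : ℝ)) *
          (σbar ^ 4 + σ ^ 4 / (k * N) + ((k + N : ℝ) / (k * N)) * (σbar ^ 2 * σ ^ 2)) :=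
  out_case_single_coordinate_variance_general T N k hT hN hk μbar σbar σ μ ε μ' ε' hμlaw hεlaw
    hμ'law hε'law hindep
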